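/- For every n ≥ 1, the following polynomial identity holds in ℝ[x_1,…,x_n]: (Σ_{i=1}^n x_i − 1) + Σ_{i=0}^{n−1} 2^i·(−x_{n−i} + Σ_{j=1}^{n−i−1} x_j) = −1. (This exhibits a degree-1 Sherali-Adams refutation, with coefficients 2^i, of the formula encoding the LeastNumber problem, whose axioms are Σ_{i=1}^n x_i − 1 ≥ 0 and −x_i + Σ_{j<i} x_j ≥ 0 for each i ∈ [n].) -/

import Mathlib

open MvPolynomial

/-! Splitting off the term `i = 0`, the remaining terms of the weighted sum are twice the same
sum for the first `n - 1` variables, so by induction on `n` the weighted sum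
of the order axioms collapses to `-Σ x_i`, which cancels the axiom `Σ x_i - 1`.

The variables are indexed by `Fin n` from `0`: the paper's `x_{n-i}` is `X i.rev`. -/

theorem Fin.sum_two_pow_mul_neg_rev_add_sum_Iio {R : Type*} [Ring R] :
    ∀ {n : ℕ} (f : Fin n → R),
      ∑ i : Fin n, (2 : R) ^ (i : ℕ) * (-f i.rev + ∑ j < i.rev, f j) = -∑ i, f i
  | 0, _ => by simp
  | n + 1, f => by
    have ih := sum_two_pow_mul_neg_rev_add_sum_Iio (fun j : Fin n => f j.castSucc)
    have last_term : ∑ j < Fin.last n, f j = ∑ j : Fin n, f j.castSucc := by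
      rw [Fin.Iio_last_eq_map, Finset.sum_map]
      rfl
    have succ_terms : ∀ i : Fin n,
        (2 : R) ^ (i.succ : ℕ) * (-f i.succ.rev + ∑ j < i.succ.rev, f j)
          = 2 * ((2 : R) ^ (i : ℕ) * (-f i.rev.castSucc + ∑ j < i.rev, f j.castSucc)) := by
      intro i
      rw [Fin.rev_succ, Fin.sum_Iio_castSucc, Fin.val_succ, pow_succ', mul_assoc]
    rw [Fin.sum_univ_succ, Fin.sum_univ_castSucc, Finset.sum_congr rfl fun i _ => succ_terms i,
      ← Finset.mul_sum, ih, Fin.rev_zero, last_term]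
    simp only [Fin.val_zero, pow_zero, one_mul, two_mul]
    abel

theorem stmt14_general (n : ℕ) :
    ((∑ i : Fin n, X i) - 1) +
      ∑ i : Fin n, (2 : MvPolynomial (Fin n) ℝ) ^ (i : ℕ) *
        (-(X i.rev) + ∑ j ∈ Finset.univ.filter (fun j : Fin n => j < i.rev), X j)
      = -1 := by
  simp only [Finset.filter_gt_eq_Iio, Fin.sum_two_pow_mul_neg_rev_add_sum_Iio]
  abel

/-- For every `n ≥ 1`, the polynomial identity
`(Σ_{i=1}^n x_i - 1) + Σ_{i=0}^{n-1} 2^i·(-x_{n-i} + Σ_{j=1}^{n-i-1} x_j) = -1`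
holds in `ℝ[x_1, …, x_n]`.  (This exhibits a degree-1 Sherali-Adams refutation,
with coefficients `2^i`, of the LeastNumber formula, whose axioms are
`Σ_{i∈[n]} x_i - 1 ≥ 0` and `-x_i + Σ_{j<i} x_j ≥ 0` for each `i ∈ [n]`.) -/
theorem stmt14 (n : ℕ) (hn : 1 ≤ n) :
    ((∑ i : Fin n, X i) - 1) +
      ∑ i : Fin n, (2 : MvPolynomial (Fin n) ℝ) ^ (i : ℕ) *
        (-(X i.rev) + ∑ j ∈ Finset.univ.filter (fun j : Fin n => j < i.rev), X j)
      = -1 :=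
  stmt14_general n
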